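/- Let h be a Hermitian form of signature (m,n) on ℂ^{m+n} with m ≤ n, let z be a maximal isotropic subspace, and let V_k be a subspace with dim(V_k) = max{2m - (n-m)(k-1), m}, z ⊆ V_k. If x is a maximal isotropic subspace that is generic with respect to V_k (i.e. dim(V_k + x) = min{m+n, dim V_k + m}) and transverse to z, then dim(V_k ∩ (z + x)) = max{2m - (n-m)k, m}. -/
import Mathlib


open Matrix Module

/-- The Hermitian pairing `h(u,v) = u* H v` associated to a matrix `H`. -/
noncomputable def sform {ι : Type*} [Fintype ι] (H : Matrix ι ι ℂ) (u v : ι → ℂ) : ℂ :=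
  star u ⬝ᵥ H.mulVec v

/-- The restriction of the Hermitian form given by `H` to the subspace `W` has
signature `(p, q)`: `W` splits as a direct sum of a `p`-dimensional subspace on which the
form is positive definite and a `q`-dimensional subspace on which it is negative definite. -/
def SigOn {ι : Type*} [Fintype ι] (H : Matrix ι ι ℂ) (W : Submodule ℂ (ι → ℂ))
    (p q : ℕ) : Prop :=
  ∃ P N : Submodule ℂ (ι → ℂ), P ≤ W ∧ N ≤ W ∧
    finrank ℂ P = p ∧ finrank ℂ N = q ∧
    (∀ v ∈ P, v ≠ 0 → 0 < (sform H v v).re) ∧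
    (∀ v ∈ N, v ≠ 0 → (sform H v v).re < 0) ∧
    P ⊓ N = ⊥ ∧ P ⊔ N = W

/-- Dimension-count step: if `dim V_k = max(2m-(n-m)(k-1), m)`, `z ⊆ V_k` is a maximal
isotropic subspace, and `x` is a maximal isotropic subspace generic with respect to `V_k`
(`dim(V_k + x) = min(m+n, dim V_k + m)`) and transverse to `z` (`dim(z + x) = 2m`), then
`dim(V_k ∩ (z + x)) = max(2m - (n-m)k, m)`. -/
theorem stmt16 (m n k : ℕ) (hmn : m ≤ n)
    (H : Matrix (Fin (m + n)) (Fin (m + n)) ℂ) (hH : H.IsHermitian)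
    (hsig : SigOn H ⊤ m n)
    (z x Vk : Submodule ℂ (Fin (m + n) → ℂ))
    (hz : finrank ℂ z = m) (hziso : ∀ u ∈ z, ∀ v ∈ z, sform H u v = 0)
    (hx : finrank ℂ x = m) (hxiso : ∀ u ∈ x, ∀ v ∈ x, sform H u v = 0)
    (hzV : z ≤ Vk)
    (hVk : (finrank ℂ Vk : ℤ) = max (2 * (m : ℤ) - ((n : ℤ) - m) * ((k : ℤ) - 1)) (m : ℤ))
    (hVkx : (finrank ℂ ↥(Vk ⊔ x) : ℤ) = min ((m : ℤ) + n) ((finrank ℂ Vk : ℤ) + m))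
    (hzx : finrank ℂ ↥(z ⊔ x) = 2 * m) :
    (finrank ℂ ↥(Vk ⊓ (z ⊔ x)) : ℤ) =
      max (2 * (m : ℤ) - ((n : ℤ) - m) * (k : ℤ)) (m : ℤ) := by
  have hsup : Vk ⊔ (z ⊔ x) = Vk ⊔ x := by
    rw [← sup_assoc, sup_eq_left.mpr hzV]
  have hdim := Submodule.finrank_sup_add_finrank_inf_eq Vk (z ⊔ x)
  rw [hsup, hzx] at hdim
  have hdimZ : (finrank ℂ ↥(Vk ⊔ x) : ℤ) + (finrank ℂ ↥(Vk ⊓ (z ⊔ x)) : ℤ)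
      = (finrank ℂ Vk : ℤ) + 2 * m := by exact_mod_cast hdim
  have hB : ((n : ℤ) - m) * (k : ℤ) = ((n : ℤ) - m) * ((k : ℤ) - 1) + ((n : ℤ) - m) := by
    ring
  have hmn' : (m : ℤ) ≤ n := by exact_mod_cast hmn
  set A := ((n : ℤ) - m) * ((k : ℤ) - 1) with hA
  rw [hB]
  omega
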